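/- The Hamiltonian vector field generated by H1 with respect to the Poisson bracket of the map (P.iv) yields the Volterra lattice equations on the coordinates w1 and w2: dw1/dt = {w1, H1} = w1*(w2 - w0) and dw2/dt = {w2, H1} = w2*(w3 - w1). -/
import Mathlib


noncomputable def D0 (F : ℝ → ℝ → ℝ → ℝ → ℝ) (w0 w1 w2 w3 : ℝ) : ℝ :=
  deriv (fun t => F t w1 w2 w3) w0
noncomputable def D1 (F : ℝ → ℝ → ℝ → ℝ → ℝ) (w0 w1 w2 w3 : ℝ) : ℝ :=
  deriv (fun t => F w0 t w2 w3) w1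
noncomputable def D2 (F : ℝ → ℝ → ℝ → ℝ → ℝ) (w0 w1 w2 w3 : ℝ) : ℝ :=
  deriv (fun t => F w0 w1 t w3) w2
noncomputable def D3 (F : ℝ → ℝ → ℝ → ℝ → ℝ) (w0 w1 w2 w3 : ℝ) : ℝ :=
  deriv (fun t => F w0 w1 w2 t) w3

noncomputable def pbIv (nu : ℝ) (F G : ℝ → ℝ → ℝ → ℝ → ℝ) (w0 w1 w2 w3 : ℝ) : ℝ :=
  (1 / w1) * (D0 F w0 w1 w2 w3 * D2 G w0 w1 w2 w3 - D2 F w0 w1 w2 w3 * D0 G w0 w1 w2 w3)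
  + (1 / w2) * (D1 F w0 w1 w2 w3 * D3 G w0 w1 w2 w3 - D3 F w0 w1 w2 w3 * D1 G w0 w1 w2 w3)
  + (-(w0 + 2*w1 + 2*w2 + w3 + nu) / (w1 * w2)) * (D0 F w0 w1 w2 w3 * D3 G w0 w1 w2 w3 - D3 F w0 w1 w2 w3 * D0 G w0 w1 w2 w3)

noncomputable def H1iv (a b nu w0 w1 w2 w3 : ℝ) : ℝ :=
  w1*w2*(w2*w3 + w0*w1 - w0*w3 + (w1+w2)^2 + nu*(w1+w2) + b) + a*(w1+w2)

lemma deriv_lin (m c x : ℝ) : deriv (fun t : ℝ => m*t + c) x = m := by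
  have := ((hasDerivAt_id x).const_mul m).add_const c
  simpa using this.deriv

lemma d0_H1iv (a b nu w0 w1 w2 w3 : ℝ) :
    D0 (H1iv a b nu) w0 w1 w2 w3 = w1*w2*(w1-w3) := by
  have h : (fun t : ℝ => H1iv a b nu t w1 w2 w3)
      = fun t => (w1*w2*(w1-w3))*t + (w1*w2*(w2*w3+(w1+w2)^2+nu*(w1+w2)+b)+a*(w1+w2)) := by
    funext t; simp only [H1iv]; ring
  rw [D0, h, deriv_lin]

lemma d3_H1iv (a b nu w0 w1 w2 w3 : ℝ) :
    D3 (H1iv a b nu) w0 w1 w2 w3 = w1*w2*(w2-w0) := by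
  have h : (fun t : ℝ => H1iv a b nu w0 w1 w2 t)
      = fun t => (w1*w2*(w2-w0))*t + (w1*w2*(w0*w1+(w1+w2)^2+nu*(w1+w2)+b)+a*(w1+w2)) := by
    funext t; simp only [H1iv]; ring
  rw [D3, h, deriv_lin]

theorem stmt3 (a b nu w0 w1 w2 w3 : ℝ) (h : w1 * w2 ≠ 0) :
    pbIv nu (fun _ x _ _ => x) (H1iv a b nu) w0 w1 w2 w3 = w1 * (w2 - w0) ∧
    pbIv nu (fun _ _ x _ => x) (H1iv a b nu) w0 w1 w2 w3 = w2 * (w3 - w1) := by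
  have h1 : w1 ≠ 0 := fun hh => h (by rw [hh]; ring)
  have h2 : w2 ≠ 0 := fun hh => h (by rw [hh]; ring)
  constructor <;>
  · simp only [pbIv, D0, D1, D2, D3, deriv_const, deriv_id'']
    rw [← D0, ← D3, d0_H1iv, d3_H1iv]
    field_simp
    ring
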